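/- Let σ ∈ R\{0}, H_0 and H*_{0,1} as above with −∞ < H*_{0,1} < 0, and H(φ) = H_0(φ) + A(∫_{R²}φ²)². If A = |H*_{0,1}| then inf_{φ∈H^1(R²)} H(φ) = 0 and there exist infinitely many minimizers: if Q ∈ H^1(R²) satisfies ‖Q‖²_{L²} = 1 and H_0(Q) = H*_{0,1}, then for every q ≥ 0 and x_0 ∈ R², the function Q_{q,x_0}(x) := q Q(q^{1/2}(x − x_0)) satisfies ‖Q_{q,x_0}‖²_{L²} = q, H_0(Q_{q,x_0}) = q² H*_{0,1}, and H(Q_{q,x_0}) = 0. -/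

import Mathlib

open MeasureTheory

noncomputable section

/-- Membership in `H^1(ℝ²)` (together with its embedding into `L³`), modelled via
`C^1` regularity and integrability of `|∇φ|²`, `φ²`, and `|φ|³`. -/
def InH1 (φ : EuclideanSpace ℝ (Fin 2) → ℝ) : Prop :=
  ContDiff ℝ 1 φ ∧ Integrable (fun x => ‖fderiv ℝ φ x‖ ^ 2) ∧
    Integrable (fun x => φ x ^ 2) ∧ Integrable (fun x => |φ x| ^ 3)

/-- The Hamiltonian `H₀(φ) = (1/2)∫|∇φ|² + (σ/3)∫φ³` on `ℝ²`. -/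
def H0 (σ : ℝ) (φ : EuclideanSpace ℝ (Fin 2) → ℝ) : ℝ :=
  (1 / 2) * (∫ x, ‖fderiv ℝ φ x‖ ^ 2) + (σ / 3) * ∫ x, φ x ^ 3

/-- The grand-canonical Hamiltonian `H(φ) = H₀(φ) + A(∫φ²)²` on `ℝ²`. -/
def Ham (σ A : ℝ) (φ : EuclideanSpace ℝ (Fin 2) → ℝ) : ℝ :=
  H0 σ φ + A * (∫ x, φ x ^ 2) ^ 2

/-- The set of values `H₀(φ)` over the unit-mass constraint `∫φ² = 1`. -/
def S01 (σ : ℝ) : Set ℝ :=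
  {r : ℝ | ∃ φ, InH1 φ ∧ (∫ x, φ x ^ 2) = 1 ∧ H0 σ φ = r}

/-! Under `φ ↦ q φ(√q (· - x₀))` on `ℝ²` the mass `∫φ²` scales by `q`, while both terms of `H₀`
scale by `q²`. Rescaling any `φ` of mass `m > 0` to unit mass therefore gives
`H₀(φ) ≥ H*_{0,1} m²`, so `H(φ) ≥ (H*_{0,1} + A) m² = 0` when `A = -H*_{0,1}`; a function of
mass zero vanishes a.e., so its `H` is the nonnegative Dirichlet term. The rescaled minimizers
`Q_{q,x₀}` attain equality. -/

section HaarRescaling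

variable {E F : Type*} [NormedAddCommGroup E] [NormedSpace ℝ E] [FiniteDimensional ℝ E]
  [MeasurableSpace E] [BorelSpace E] {μ : Measure E} [μ.IsAddHaarMeasure]
  [NormedAddCommGroup F]

theorem MeasureTheory.Integrable.comp_smul_sub {f : E → F} (hf : Integrable f μ) {c : ℝ}
    (hc : c ≠ 0) (x₀ : E) : Integrable (fun x => f (c • (x - x₀))) μ :=
  (hf.comp_smul hc).comp_sub_right x₀

variable [NormedSpace ℝ F]

theorem integral_comp_smul_sub_of_nonneg (f : E → F) {c : ℝ} (hc : 0 ≤ c) (x₀ : E) :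
    ∫ x, f (c • (x - x₀)) ∂μ = (c ^ Module.finrank ℝ E)⁻¹ • ∫ x, f x ∂μ := by
  rw [integral_sub_right_eq_self (fun y => f (c • y)) x₀,
    Measure.integral_comp_smul_of_nonneg μ f c (hR := hc)]

end HaarRescaling

theorem fderiv_const_mul_comp_smul_sub {E : Type*} [NormedAddCommGroup E] [NormedSpace ℝ E]
    {φ : E → ℝ} (q c : ℝ) (x₀ x : E) (hφ : DifferentiableAt ℝ φ (c • (x - x₀))) :
    fderiv ℝ (fun x => q * φ (c • (x - x₀))) x = (q * c) • fderiv ℝ φ (c • (x - x₀)) := by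
  have hinner : HasFDerivAt (fun x : E => c • (x - x₀)) (c • ContinuousLinearMap.id ℝ E) x :=
    ((hasFDerivAt_id x).sub_const x₀).const_smul c
  have h : HasFDerivAt (fun x => q * φ (c • (x - x₀)))
      (q • (fderiv ℝ φ (c • (x - x₀))).comp (c • ContinuousLinearMap.id ℝ E)) x :=
    (hφ.hasFDerivAt.comp x hinner).const_mul q
  rw [h.fderiv]
  ext v
  simp [mul_smul]

local notation "ℝ²" => EuclideanSpace ℝ (Fin 2)

def rescale (q : ℝ) (x₀ : ℝ²) (φ : ℝ² → ℝ) : ℝ² → ℝ :=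
  fun x => q * φ (q ^ ((1 : ℝ) / 2) • (x - x₀))

section Rescale

variable {q : ℝ} (x₀ : ℝ²) {φ : ℝ² → ℝ}

theorem rpow_half_sq (hq : 0 ≤ q) : (q ^ ((1 : ℝ) / 2)) ^ 2 = q := by
  rw [← Real.sqrt_eq_rpow, Real.sq_sqrt hq]

theorem integral_comp_rpow_half_smul_sub (hq : 0 ≤ q) (f : ℝ² → ℝ) :
    ∫ x, f (q ^ ((1 : ℝ) / 2) • (x - x₀)) = q⁻¹ * ∫ x, f x := by
  rw [integral_comp_smul_sub_of_nonneg f (by positivity) x₀, finrank_euclideanSpace_fin,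
    rpow_half_sq hq, smul_eq_mul]

theorem integral_rescale_sq (hq : 0 ≤ q) (φ : ℝ² → ℝ) :
    ∫ x, rescale q x₀ φ x ^ 2 = q * ∫ x, φ x ^ 2 := by
  simp only [rescale, mul_pow]
  rw [integral_const_mul, integral_comp_rpow_half_smul_sub x₀ hq (fun y => φ y ^ 2)]
  rcases hq.eq_or_lt with rfl | hq
  · simp
  · field_simp

theorem integral_rescale_cube (hq : 0 ≤ q) (φ : ℝ² → ℝ) :
    ∫ x, rescale q x₀ φ x ^ 3 = q ^ 2 * ∫ x, φ x ^ 3 := by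
  simp only [rescale, mul_pow]
  rw [integral_const_mul, integral_comp_rpow_half_smul_sub x₀ hq (fun y => φ y ^ 3)]
  rcases hq.eq_or_lt with rfl | hq
  · simp
  · field_simp

theorem norm_fderiv_rescale_sq (hq : 0 ≤ q) (hφ : Differentiable ℝ φ) (x : ℝ²) :
    ‖fderiv ℝ (rescale q x₀ φ) x‖ ^ 2
      = q ^ 3 * ‖fderiv ℝ φ (q ^ ((1 : ℝ) / 2) • (x - x₀))‖ ^ 2 := by
  unfold rescale
  rw [fderiv_const_mul_comp_smul_sub q _ x₀ x (hφ _), norm_smul, mul_pow,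
    Real.norm_eq_abs, sq_abs, mul_pow, rpow_half_sq hq]
  ring

theorem integral_norm_fderiv_rescale_sq (hq : 0 ≤ q) (hφ : Differentiable ℝ φ) :
    ∫ x, ‖fderiv ℝ (rescale q x₀ φ) x‖ ^ 2 = q ^ 2 * ∫ x, ‖fderiv ℝ φ x‖ ^ 2 := by
  simp only [norm_fderiv_rescale_sq x₀ hq hφ]
  rw [integral_const_mul, integral_comp_rpow_half_smul_sub x₀ hq (fun y => ‖fderiv ℝ φ y‖ ^ 2)]
  rcases hq.eq_or_lt with rfl | hq
  · simp
  · field_simp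

theorem H0_rescale (σ : ℝ) (hq : 0 ≤ q) (hφ : Differentiable ℝ φ) :
    H0 σ (rescale q x₀ φ) = q ^ 2 * H0 σ φ := by
  rw [H0, H0, integral_norm_fderiv_rescale_sq x₀ hq hφ, integral_rescale_cube x₀ hq]
  ring

theorem InH1.rescale (hφ : InH1 φ) (hq : 0 < q) : InH1 (rescale q x₀ φ) := by
  obtain ⟨hdiff, hgrad, hsq, hcube⟩ := hφ
  have hc : q ^ ((1 : ℝ) / 2) ≠ 0 := (Real.rpow_pos_of_pos hq _).ne'
  refine ⟨contDiff_const.mul (hdiff.comp ((contDiff_id.sub contDiff_const).const_smul _)),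
    ?_, ?_, ?_⟩
  · simp only [norm_fderiv_rescale_sq x₀ hq.le (hdiff.differentiable one_ne_zero)]
    exact (hgrad.comp_smul_sub hc x₀).const_mul _
  · simp only [_root_.rescale, mul_pow]
    exact (hsq.comp_smul_sub hc x₀).const_mul _
  · simp only [_root_.rescale, abs_mul, mul_pow]
    exact (hcube.comp_smul_sub hc x₀).const_mul _

end Rescale

theorem H0_nonneg_of_integral_sq_eq_zero (σ : ℝ) {φ : ℝ² → ℝ}
    (hφ : Integrable (fun x => φ x ^ 2)) (hmass : ∫ x, φ x ^ 2 = 0) : 0 ≤ H0 σ φ := by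
  have hφ0 : φ =ᵐ[volume] 0 := by
    filter_upwards [(integral_eq_zero_iff_of_nonneg (fun x => sq_nonneg (φ x)) hφ).mp hmass]
      with x hx
    exact pow_eq_zero_iff two_ne_zero |>.mp hx
  have hcube : ∫ x, φ x ^ 3 = 0 :=
    integral_eq_zero_of_ae (hφ0.mono fun x hx => by simp [hx])
  rw [H0, hcube, mul_zero, add_zero]
  exact mul_nonneg (by norm_num) (integral_nonneg fun x => by positivity)

theorem sInf_S01_mul_sq_le_H0 {σ : ℝ} (hbdd : BddBelow (S01 σ)) {φ : ℝ² → ℝ} (hφ : InH1 φ) :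
    sInf (S01 σ) * (∫ x, φ x ^ 2) ^ 2 ≤ H0 σ φ := by
  set m := ∫ x, φ x ^ 2
  have hm0 : 0 ≤ m := integral_nonneg fun x => sq_nonneg (φ x)
  rcases hm0.eq_or_lt with hm | hm
  · rw [← hm]
    simpa using H0_nonneg_of_integral_sq_eq_zero σ hφ.2.2.1 hm.symm
  · have hmem : H0 σ (rescale m⁻¹ 0 φ) ∈ S01 σ :=
      ⟨_, hφ.rescale 0 (inv_pos.mpr hm),
        by rw [integral_rescale_sq 0 (inv_nonneg.mpr hm.le), inv_mul_cancel₀ hm.ne'], rfl⟩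
    have hle := csInf_le hbdd hmem
    rw [H0_rescale 0 σ (inv_nonneg.mpr hm.le) (hφ.1.differentiable one_ne_zero)] at hle
    calc sInf (S01 σ) * m ^ 2 ≤ (m⁻¹ ^ 2 * H0 σ φ) * m ^ 2 := by gcongr
      _ = H0 σ φ := by field_simp

theorem mass_H0_Ham_rescale {σ A : ℝ} (hA : A = -sInf (S01 σ)) {Q : ℝ² → ℝ}
    (hQ : Differentiable ℝ Q) (hQmass : ∫ x, Q x ^ 2 = 1) (hQmin : H0 σ Q = sInf (S01 σ))
    {q : ℝ} (hq : 0 ≤ q) (x₀ : ℝ²) :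
    ∫ x, rescale q x₀ Q x ^ 2 = q ∧ H0 σ (rescale q x₀ Q) = q ^ 2 * sInf (S01 σ) ∧
      Ham σ A (rescale q x₀ Q) = 0 := by
  have hmass : ∫ x, rescale q x₀ Q x ^ 2 = q := by
    rw [integral_rescale_sq x₀ hq, hQmass, mul_one]
  have hH0 : H0 σ (rescale q x₀ Q) = q ^ 2 * sInf (S01 σ) := by
    rw [H0_rescale x₀ σ hq hQ, hQmin]
  refine ⟨hmass, hH0, ?_⟩
  rw [Ham, hH0, hmass, hA]
  ring

theorem stmt7_general (σ A : ℝ)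
    (hbdd : BddBelow (S01 σ)) (hneg : sInf (S01 σ) < 0)
    (hA : A = |sInf (S01 σ)|)
    (Q : EuclideanSpace ℝ (Fin 2) → ℝ) (hQ : InH1 Q)
    (hQmass : (∫ x, Q x ^ 2) = 1) (hQmin : H0 σ Q = sInf (S01 σ)) :
    IsLeast {r : ℝ | ∃ φ, InH1 φ ∧ Ham σ A φ = r} 0 ∧
    ∀ q : ℝ, 0 ≤ q → ∀ x₀ : EuclideanSpace ℝ (Fin 2),
      (∫ x, (q * Q (q ^ ((1 : ℝ) / 2) • (x - x₀))) ^ 2) = q ∧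
      H0 σ (fun x => q * Q (q ^ ((1 : ℝ) / 2) • (x - x₀))) = q ^ 2 * sInf (S01 σ) ∧
      Ham σ A (fun x => q * Q (q ^ ((1 : ℝ) / 2) • (x - x₀))) = 0 := by
  rw [abs_of_neg hneg] at hA
  have hminimizers := fun q (hq : 0 ≤ q) x₀ =>
    mass_H0_Ham_rescale hA (hQ.1.differentiable one_ne_zero) hQmass hQmin hq x₀
  refine ⟨⟨⟨_, hQ.rescale 0 one_pos, (hminimizers 1 zero_le_one 0).2.2⟩, ?_⟩, hminimizers⟩
  rintro _ ⟨φ, hφ, rfl⟩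
  have := sInf_S01_mul_sq_le_H0 hbdd hφ
  rw [Ham, hA]
  linarith

/-- In the critical case `A = |H*_{0,1}|`, the infimum of `H` is `0` and there are
infinitely many minimizers: the rescaled ground states
`Q_{q,x₀}(x) = q Q(q^{1/2}(x - x₀))` all satisfy `∫Q_{q,x₀}² = q`,
`H₀(Q_{q,x₀}) = q² H*_{0,1}`, and `H(Q_{q,x₀}) = 0`. -/
theorem stmt7 (σ A : ℝ) (hσ : σ ≠ 0)
    (hbdd : BddBelow (S01 σ)) (hneg : sInf (S01 σ) < 0)
    (hA : A = |sInf (S01 σ)|)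
    (Q : EuclideanSpace ℝ (Fin 2) → ℝ) (hQ : InH1 Q)
    (hQmass : (∫ x, Q x ^ 2) = 1) (hQmin : H0 σ Q = sInf (S01 σ)) :
    IsLeast {r : ℝ | ∃ φ, InH1 φ ∧ Ham σ A φ = r} 0 ∧
    ∀ q : ℝ, 0 ≤ q → ∀ x₀ : EuclideanSpace ℝ (Fin 2),
      (∫ x, (q * Q (q ^ ((1 : ℝ) / 2) • (x - x₀))) ^ 2) = q ∧
      H0 σ (fun x => q * Q (q ^ ((1 : ℝ) / 2) • (x - x₀))) = q ^ 2 * sInf (S01 σ) ∧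
      Ham σ A (fun x => q * Q (q ^ ((1 : ℝ) / 2) • (x - x₀))) = 0 :=
  stmt7_general σ A hbdd hneg hA Q hQ hQmass hQmin
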